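/- Let q be a prime power, k a positive integer, G a finite loopless digraph, and K a finite digraph. If |G| / N(Ḡ, K) > |H_k^q| / N(H̄_k^q, K), then minrank_q(G) ≥ k + 1, where H̄_k^q denotes the directional complement of H_k^q and |G| the number of vertices of G. -/

import Mathlib

/-- The standard bilinear form `⟨v,w⟩ = ∑ i, v i * w i` on `F^k`. -/
def bil {k : ℕ} {F : Type} [Field F] (v w : Fin k → F) : F := ∑ i, v i * w i

/-- A vector is *normal* if its first nonzero entry equals `1`. -/
def IsNormal {k : ℕ} {F : Type} [Field F] (v : Fin k → F) : Prop :=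
  ∃ i : Fin k, v i = 1 ∧ ∀ j : Fin k, j < i → v j = 0

/-- The vertex set `W` of the digraph `H_k^q`. -/
def IsHVertex {k : ℕ} {F : Type} [Field F] (p : (Fin k → F) × (Fin k → F)) : Prop :=
  IsNormal p.1 ∧ IsNormal p.2 ∧ bil p.1 p.2 ≠ 0

/-- The vertices of the digraph `H_k^q`. -/
abbrev HVtx (k : ℕ) (F : Type) [Field F] : Type :=
  {p : (Fin k → F) × (Fin k → F) // IsHVertex p}

/-- The (loopless) adjacency of `H_k^q`: there is an edge from the vertex `(v,w)` to a
distinct vertex `(v',w')` iff `⟨v,w'⟩ ≠ 0`. -/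
def HAdj {k : ℕ} {F : Type} [Field F] (a b : HVtx k F) : Prop :=
  a ≠ b ∧ bil a.val.1 b.val.2 ≠ 0

/-- The directional complement of a loopless digraph: for distinct vertices `a, b`,
`(a,b)` is an edge iff it is not an edge of the original digraph. -/
def digraphCompl {V : Type*} (G : V → V → Prop) : V → V → Prop :=
  fun a b => a ≠ b ∧ ¬ G a b
/-- `minrank F G` of a loopless digraph `G` on `{1,…,n}` over a field `F`: the minimum
rank of an `n × n` matrix `M` over `F` with `M i i ≠ 0` for all `i` and `M i j = 0`
whenever `i ≠ j` and `(i,j)` is not an edge of `G`. -/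
noncomputable def minrank {n : ℕ} (F : Type) [Field F] (G : Fin n → Fin n → Prop) : ℕ :=
  sInf {r | ∃ M : Matrix (Fin n) (Fin n) F, (∀ i, M i i ≠ 0) ∧
    (∀ i j, i ≠ j → ¬ G i j → M i j = 0) ∧ M.rank = r}

/-- `Nhom L K` is the maximum number of vertices of an induced subdigraph `L'` of `L`
(given by a subset `S` of the vertices of `L` with the restricted adjacency) such that
there exists a homomorphism from `L'` to `K`. -/
noncomputable def Nhom {VL VK : Type*} (L : VL → VL → Prop) (K : VK → VK → Prop) : ℕ :=
  sSup {n | ∃ S : Set VL,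
    (∃ f : S → VK, ∀ x y : S, L x.val y.val → K (f x) (f y)) ∧ Nat.card S = n}

/-!
If `M` fits `G` and has rank at most `k`, write `M i j = ⟨a i, b j⟩` with `a i, b j ∈ F^k`.
Normalizing the pairs `(a i, b i)` gives a homomorphism `φ` from `Ḡ` to `H̄_k^q`: the diagonal
of `M` is nonzero and `M i j = 0` along the edges of `Ḡ`. The group `GL_k(F)` acts on `H_k^q` by
`(v, w) ↦ (A v, A⁻ᵀ w)` followed by normalization; this preserves `⟨v, w'⟩ ≠ 0`, hence the
edges, and the action is transitive. Averaging over `A`, for a largest `S ⊆ H̄_k^q` that maps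
to `K` some `A` gives `|{i | A φ(i) ∈ S}| / |G| ≥ |S| / |H_k^q|`, and composing `i ↦ A φ(i)`
with a homomorphism `S → K` maps these `i` to `K`. Hence `|G| / N(Ḡ, K) ≤ |H_k^q| / N(H̄_k^q, K)`.
-/

open Finset Matrix

section Nhom

variable {VL VK : Type*} (L : VL → VL → Prop) (K : VK → VK → Prop)

def HasHomOn (S : Set VL) : Prop :=
  ∃ f : S → VK, ∀ x y : S, L x y → K (f x) (f y)

variable [Finite VL]

lemma bddAbove_card_hasHomOn : BddAbove {n | ∃ S, HasHomOn L K S ∧ Nat.card S = n} :=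
  ⟨Nat.card VL, by
    rintro _ ⟨S, -, rfl⟩
    exact Nat.card_le_card_of_injective _ Subtype.val_injective⟩

variable {L K} in
lemma card_le_Nhom {S : Set VL} (hS : HasHomOn L K S) : Nat.card S ≤ Nhom L K :=
  le_csSup (bddAbove_card_hasHomOn L K) ⟨S, hS, rfl⟩

lemma exists_hasHomOn_card_eq_Nhom : ∃ S, HasHomOn L K S ∧ Nat.card S = Nhom L K :=
  Nat.sSup_mem (s := {n | ∃ S, HasHomOn L K S ∧ Nat.card S = n})
    ⟨0, ∅, ⟨fun x => x.2.elim, fun x => x.2.elim⟩, by simp⟩ (bddAbove_card_hasHomOn L K)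

end Nhom

lemma sum_card_subtype_comm {α β : Type*} [Fintype α] [Fintype β] (r : α → β → Prop) :
    ∑ a, Nat.card {b // r a b} = ∑ b, Nat.card {a // r a b} := by
  classical
  simp only [Nat.card_eq_fintype_card, Fintype.card_subtype]
  exact sum_card_bipartiteAbove_eq_sum_card_bipartiteBelow r

section Averaging

open MulAction

variable {Γ X : Type*} [Group Γ] [MulAction Γ X] [IsPretransitive Γ X] [Finite Γ] [Finite X]

lemma card_smul_mem_mul_card (S : Set X) (x : X) :
    Nat.card {g : Γ // g • x ∈ S} * Nat.card X = Nat.card S * Nat.card Γ := by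
  have := Fintype.ofFinite Γ
  have := Fintype.ofFinite X
  have hconst : ∀ y, Nat.card {g : Γ // g • y ∈ S} = Nat.card {g : Γ // g • x ∈ S} := by
    intro y
    obtain ⟨h, rfl⟩ := exists_smul_eq Γ x y
    exact Nat.card_congr ((Equiv.mulRight h).subtypeEquiv fun g => by simp [mul_smul])
  have hrow : ∀ g : Γ, Nat.card {y : X // g • y ∈ S} = Nat.card S := fun g =>
    Nat.card_congr ((toPerm g).subtypeEquiv fun _ => Iff.rfl)
  calc Nat.card {g : Γ // g • x ∈ S} * Nat.card X
      = ∑ y : X, Nat.card {g : Γ // g • y ∈ S} := by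
        simp [hconst, Nat.card_eq_fintype_card, mul_comm]
    _ = ∑ g : Γ, Nat.card {y : X // g • y ∈ S} := (sum_card_subtype_comm _).symm
    _ = Nat.card S * Nat.card Γ := by simp [hrow, Nat.card_eq_fintype_card, mul_comm]

variable (Γ) in
lemma exists_card_mul_card_le_card_smul_mem {I : Type*} [Finite I] (φ : I → X) (S : Set X) :
    ∃ g : Γ, Nat.card I * Nat.card S ≤ Nat.card {i // g • φ i ∈ S} * Nat.card X := by
  have := Fintype.ofFinite Γ
  have := Fintype.ofFinite I
  have hsum : ∑ g : Γ, Nat.card I * Nat.card S =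
      ∑ g : Γ, Nat.card {i // g • φ i ∈ S} * Nat.card X :=
    calc ∑ g : Γ, Nat.card I * Nat.card S = ∑ i : I, Nat.card S * Nat.card Γ := by
          simp [Nat.card_eq_fintype_card, mul_comm, mul_left_comm]
      _ = ∑ i : I, Nat.card {g : Γ // g • φ i ∈ S} * Nat.card X := by
          simp only [card_smul_mem_mul_card]
      _ = ∑ g : Γ, Nat.card {i // g • φ i ∈ S} * Nat.card X := by
          rw [← sum_mul, ← sum_mul, sum_card_subtype_comm]
  obtain ⟨g, -, hg⟩ := exists_le_of_sum_le univ_nonempty hsum.le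
  exact ⟨g, hg⟩

theorem card_mul_Nhom_le_of_isPretransitive {I VK : Type*} [Finite I] (L : X → X → Prop)
    (hL : ∀ (g : Γ) x y, L x y → L (g • x) (g • y)) (G : I → I → Prop) (K : VK → VK → Prop)
    (φ : I → X) (hφ : ∀ i j, G i j → L (φ i) (φ j)) :
    Nat.card I * Nhom L K ≤ Nat.card X * Nhom G K := by
  obtain ⟨S, ⟨f, hf⟩, hS⟩ := exists_hasHomOn_card_eq_Nhom L K
  obtain ⟨g, hg⟩ := exists_card_mul_card_le_card_smul_mem Γ φ S
  have hT : HasHomOn G K {i | g • φ i ∈ S} :=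
    ⟨fun i => f ⟨g • φ i, i.2⟩, fun i j hij => hf _ _ (hL g _ _ (hφ _ _ hij))⟩
  calc Nat.card I * Nhom L K ≤ Nat.card {i // g • φ i ∈ S} * Nat.card X := hS ▸ hg
    _ ≤ Nhom G K * Nat.card X := Nat.mul_le_mul_right _ (card_le_Nhom hT)
    _ = Nat.card X * Nhom G K := mul_comm _ _

end Averaging

section Normalize

variable {k : ℕ} {F : Type} [Field F]

lemma bil_eq_dotProduct (v w : Fin k → F) : bil v w = v ⬝ᵥ w := rfl

lemma IsNormal.ne_zero {v : Fin k → F} (hv : IsNormal v) : v ≠ 0 := by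
  obtain ⟨i, hi, -⟩ := hv
  rintro rfl
  exact zero_ne_one hi

lemma IsNormal.eq_one_of_smul {v : Fin k → F} {c : F} (hv : IsNormal v)
    (hcv : IsNormal (c • v)) : c = 1 := by
  obtain ⟨i, hi, hlt⟩ := hv
  obtain ⟨j, hj, hltj⟩ := hcv
  simp only [Pi.smul_apply, smul_eq_mul] at hj hltj
  rcases lt_trichotomy i j with h | rfl | h
  · have hc : c = 0 := by simpa [hi] using hltj i h
    simp [hc] at hj
  · simpa [hi] using hj
  · simp [hlt j h] at hj

lemma exists_isNormal_smul {v : Fin k → F} (hv : v ≠ 0) : ∃ c : F, IsNormal (c • v) := by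
  classical
  have hex : ∃ i, v i ≠ 0 := Function.ne_iff.mp hv
  refine ⟨(v (Fin.find _ hex))⁻¹, Fin.find _ hex, inv_mul_cancel₀ (Fin.find_spec hex), ?_⟩
  intro j hj
  simp [not_not.mp (Fin.find_min hex hj)]

open Classical in
/-- The normal vector on the line through `v`; `0` when `v = 0`. -/
noncomputable def normalRep (v : Fin k → F) : Fin k → F :=
  if h : ∃ c : F, IsNormal (c • v) then h.choose • v else 0

@[simp]
lemma normalRep_zero : normalRep (0 : Fin k → F) = 0 := by
  unfold normalRep
  split_ifs <;> simp

lemma isNormal_normalRep {v : Fin k → F} (hv : v ≠ 0) : IsNormal (normalRep v) := by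
  have h := exists_isNormal_smul hv
  rw [normalRep, dif_pos h]
  exact h.choose_spec

lemma exists_normalRep_eq_smul {v : Fin k → F} (hv : v ≠ 0) :
    ∃ c : F, c ≠ 0 ∧ normalRep v = c • v := by
  have h := exists_isNormal_smul hv
  refine ⟨h.choose, fun hc => (isNormal_normalRep hv).ne_zero ?_, by rw [normalRep, dif_pos h]⟩
  rw [normalRep, dif_pos h, hc, zero_smul]

lemma IsNormal.normalRep_eq {v : Fin k → F} (hv : IsNormal v) : normalRep v = v := by
  obtain ⟨c, -, hc⟩ := exists_normalRep_eq_smul hv.ne_zero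
  have hc1 : c = 1 := hv.eq_one_of_smul (hc ▸ isNormal_normalRep hv.ne_zero)
  rw [hc, hc1, one_smul]

lemma normalRep_smul {c : F} (hc : c ≠ 0) (v : Fin k → F) : normalRep (c • v) = normalRep v := by
  rcases eq_or_ne v 0 with rfl | hv
  · rw [smul_zero]
  obtain ⟨d, hd, hdv⟩ := exists_normalRep_eq_smul hv
  obtain ⟨e, -, hecv⟩ := exists_normalRep_eq_smul (smul_ne_zero hc hv)
  have hrel : normalRep (c • v) = (e * c * d⁻¹) • normalRep v := by
    rw [hecv, hdv, smul_smul, smul_smul, mul_assoc, inv_mul_cancel₀ hd, mul_one]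
  have h1 : e * c * d⁻¹ = 1 :=
    (isNormal_normalRep hv).eq_one_of_smul (hrel ▸ isNormal_normalRep (smul_ne_zero hc hv))
  rw [hrel, h1, one_smul]

lemma bil_normalRep_eq_zero_iff {v w : Fin k → F} (hv : v ≠ 0) (hw : w ≠ 0) :
    bil (normalRep v) (normalRep w) = 0 ↔ bil v w = 0 := by
  obtain ⟨c, hc, hcv⟩ := exists_normalRep_eq_smul hv
  obtain ⟨d, hd, hdw⟩ := exists_normalRep_eq_smul hw
  simp [bil_eq_dotProduct, hcv, hdw, hc, hd]

end Normalize

section Transitivity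

variable {F : Type} [Field F] {m : ℕ}

lemma exists_basis_zero_eq_and_succ_dotProduct_eq_zero (v w : Fin (m + 1) → F)
    (h : v ⬝ᵥ w ≠ 0) :
    ∃ B : Module.Basis (Fin (m + 1)) F (Fin (m + 1) → F),
      B 0 = v ∧ ∀ j : Fin m, B j.succ ⬝ᵥ w = 0 := by
  let f : Module.Dual F (Fin (m + 1) → F) :=
    { toFun z := z ⬝ᵥ w
      map_add' := (add_dotProduct · · w)
      map_smul' := (smul_dotProduct · · w) }
  have hdim : Module.finrank F (LinearMap.ker f) = m := by
    have hf : f ≠ 0 := fun h0 => h (LinearMap.congr_fun h0 v)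
    simpa using Module.Dual.finrank_ker_add_one_of_ne_zero hf
  have hli : ∀ c : F, ∀ z ∈ LinearMap.ker f, c • v + z = 0 → c = 0 := by
    intro c z hz hcz
    have := congrArg f hcz
    rw [map_add, map_smul, LinearMap.mem_ker.mp hz, add_zero, map_zero, smul_eq_mul] at this
    exact (mul_eq_zero.mp this).resolve_right h
  have hsp : ∀ z, ∃ c : F, z + c • v ∈ LinearMap.ker f := fun z =>
    ⟨-(f z / f v), by simp [f, add_dotProduct, smul_dotProduct, div_mul_cancel₀ _ h]⟩
  let b := Module.finBasisOfFinrankEq F _ hdim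
  refine ⟨.mkFinCons v b hli hsp, by simp, fun j => ?_⟩
  simp only [Module.Basis.coe_mkFinCons, Fin.cons_succ, Function.comp_apply]
  exact LinearMap.mem_ker.mp (b j).2

lemma exists_GL_mulVec_single_eq (v w : Fin (m + 1) → F) (h : v ⬝ᵥ w ≠ 0) :
    ∃ A : GL (Fin (m + 1)) F, (A : Matrix (Fin (m + 1)) (Fin (m + 1)) F) *ᵥ Pi.single 0 1 = v ∧
      w ᵥ* (A : Matrix (Fin (m + 1)) (Fin (m + 1)) F) = (v ⬝ᵥ w) • Pi.single 0 1 := by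
  obtain ⟨B, hB0, hBsucc⟩ := exists_basis_zero_eq_and_succ_dotProduct_eq_zero v w h
  let e := Pi.basisFun F (Fin (m + 1))
  have hcol : ∀ i j, e.toMatrix B i j = B j i := fun i j => by
    rw [Module.Basis.toMatrix_apply, Pi.basisFun_repr]
  have hrow : ∀ j, (w ᵥ* e.toMatrix B) j = B j ⬝ᵥ w := fun j => by
    simp only [vecMul, dotProduct, hcol, mul_comm]
  refine ⟨⟨e.toMatrix B, B.toMatrix e, e.toMatrix_mul_toMatrix_flip B,
    B.toMatrix_mul_toMatrix_flip e⟩, ?_, ?_⟩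
  · ext i
    rw [mulVec_single_one, Units.val_mk, col_apply, hcol, hB0]
  · ext j
    refine Fin.cases ?_ (fun j => ?_) j
    · simp [hrow, hB0]
    · simp [hrow, hBsucc]

end Transitivity

section HAction

open MulAction

variable {k : ℕ} {F : Type} [Field F]

lemma left_ne_zero_of_bil_ne_zero {v w : Fin k → F} (h : bil v w ≠ 0) : v ≠ 0 := by
  rintro rfl
  simp [bil_eq_dotProduct] at h

lemma right_ne_zero_of_bil_ne_zero {v w : Fin k → F} (h : bil v w ≠ 0) : w ≠ 0 := by
  rintro rfl
  simp [bil_eq_dotProduct] at h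

noncomputable def HVtx.ofPair (v w : Fin k → F) (h : bil v w ≠ 0) : HVtx k F :=
  ⟨(normalRep v, normalRep w), isNormal_normalRep (left_ne_zero_of_bil_ne_zero h),
    isNormal_normalRep (right_ne_zero_of_bil_ne_zero h),
    (bil_normalRep_eq_zero_iff (left_ne_zero_of_bil_ne_zero h)
      (right_ne_zero_of_bil_ne_zero h)).not.mpr h⟩

lemma HVtx.ofPair_val {v w : Fin k → F} (h : bil v w ≠ 0) :
    (HVtx.ofPair v w h).val = (normalRep v, normalRep w) := rfl

lemma HVtx.ofPair_self (x : HVtx k F) : HVtx.ofPair x.val.1 x.val.2 x.2.2.2 = x :=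
  Subtype.ext (Prod.ext x.2.1.normalRep_eq x.2.2.1.normalRep_eq)

lemma HVtx.bil_ofPair_eq_zero_iff {v w v' w' : Fin k → F} (h : bil v w ≠ 0)
    (h' : bil v' w' ≠ 0) :
    bil (HVtx.ofPair v w h).val.1 (HVtx.ofPair v' w' h').val.2 = 0 ↔ bil v w' = 0 :=
  bil_normalRep_eq_zero_iff (left_ne_zero_of_bil_ne_zero h) (right_ne_zero_of_bil_ne_zero h')

lemma normalRep_map_normalRep (f : (Fin k → F) →ₗ[F] Fin k → F) (v : Fin k → F) :
    normalRep (f (normalRep v)) = normalRep (f v) := by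
  rcases eq_or_ne v 0 with rfl | hv
  · simp
  obtain ⟨c, hc, hcv⟩ := exists_normalRep_eq_smul hv
  rw [hcv, map_smul, normalRep_smul hc]

lemma bil_mulVec_vecMul_inv (A : GL (Fin k) F) (v w : Fin k → F) :
    bil ((A : Matrix (Fin k) (Fin k) F) *ᵥ v) (w ᵥ* (A⁻¹ : GL (Fin k) F)) = bil v w := by
  rw [bil_eq_dotProduct, bil_eq_dotProduct, dotProduct_comm, dotProduct_mulVec, vecMul_vecMul,
    ← Units.val_mul, inv_mul_cancel, Units.val_one, vecMul_one, dotProduct_comm]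

noncomputable instance : SMul (GL (Fin k) F) (HVtx k F) where
  smul A x := HVtx.ofPair ((A : Matrix (Fin k) (Fin k) F) *ᵥ x.val.1)
    (x.val.2 ᵥ* (A⁻¹ : GL (Fin k) F)) ((bil_mulVec_vecMul_inv A _ _).symm ▸ x.2.2.2)

lemma HVtx.smul_ofPair (A : GL (Fin k) F) {v w : Fin k → F} (h : bil v w ≠ 0) :
    A • HVtx.ofPair v w h = HVtx.ofPair ((A : Matrix (Fin k) (Fin k) F) *ᵥ v)
      (w ᵥ* (A⁻¹ : GL (Fin k) F)) ((bil_mulVec_vecMul_inv A _ _).symm ▸ h) :=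
  Subtype.ext (Prod.ext (normalRep_map_normalRep (mulVecLin _) v)
    (normalRep_map_normalRep (vecMulLinear _) w))

lemma HVtx.smul_val (A : GL (Fin k) F) (x : HVtx k F) :
    (A • x).val = (normalRep ((A : Matrix (Fin k) (Fin k) F) *ᵥ x.val.1),
      normalRep (x.val.2 ᵥ* (A⁻¹ : GL (Fin k) F))) := rfl

noncomputable instance : MulAction (GL (Fin k) F) (HVtx k F) where
  one_smul x := Subtype.ext <| by
    simp [HVtx.smul_val, x.2.1.normalRep_eq, x.2.2.1.normalRep_eq]
  mul_smul A B x := by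
    rw [← HVtx.ofPair_self x, HVtx.smul_ofPair, HVtx.smul_ofPair, HVtx.smul_ofPair]
    exact Subtype.ext <| by simp [HVtx.ofPair_val, mulVec_mulVec, vecMul_vecMul]

lemma hAdj_smul_iff (A : GL (Fin k) F) (x y : HVtx k F) :
    HAdj (A • x) (A • y) ↔ HAdj x y := by
  have hbil : bil (A • x).val.1 (A • y).val.2 = 0 ↔ bil x.val.1 y.val.2 = 0 :=
    (HVtx.bil_ofPair_eq_zero_iff _ _).trans (by rw [bil_mulVec_vecMul_inv])
  exact and_congr (smul_left_cancel_iff A).not hbil.not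

lemma digraphCompl_hAdj_smul (A : GL (Fin k) F) {x y : HVtx k F}
    (h : digraphCompl HAdj x y) : digraphCompl HAdj (A • x) (A • y) :=
  ⟨(smul_left_cancel_iff A).not.mpr h.1, (hAdj_smul_iff A x y).not.mpr h.2⟩

instance : IsPretransitive (GL (Fin k) F) (HVtx k F) := by
  cases k with
  | zero => exact ⟨fun x => x.2.1.elim fun i => i.elim0⟩
  | succ m =>
    have he : bil (Pi.single 0 1 : Fin (m + 1) → F) (Pi.single 0 1) ≠ 0 := by
      simp [bil_eq_dotProduct]
    rw [isPretransitive_iff_base (HVtx.ofPair _ _ he)]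
    intro x
    obtain ⟨A, hAv, hAw⟩ := exists_GL_mulVec_single_eq x.val.1 x.val.2 x.2.2.2
    have hc : x.val.1 ⬝ᵥ x.val.2 ≠ 0 := x.2.2.2
    have hAw' : (Pi.single 0 1 : Fin (m + 1) → F) ᵥ* (A⁻¹ : GL (Fin (m + 1)) F) =
        (x.val.1 ⬝ᵥ x.val.2)⁻¹ • x.val.2 := by
      rw [← inv_smul_smul₀ hc (Pi.single 0 1), ← hAw, smul_vecMul, vecMul_vecMul, ← Units.val_mul,
        mul_inv_cancel, Units.val_one, vecMul_one]
    refine ⟨A, ?_⟩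
    conv_rhs => rw [← HVtx.ofPair_self x]
    rw [HVtx.smul_ofPair]
    exact Subtype.ext <| by
      rw [HVtx.ofPair_val, HVtx.ofPair_val, hAv, hAw', normalRep_smul (inv_ne_zero hc)]

end HAction

section Minrank

variable {F : Type} [Field F]

lemma Matrix.exists_mul_eq_of_rank_le {m n : Type*} [Fintype m] [Fintype n] {k : ℕ}
    (M : Matrix m n F) (h : M.rank ≤ k) :
    ∃ (U : Matrix m (Fin k) F) (V : Matrix (Fin k) n F), U * V = M := by
  classical
  let R := LinearMap.range M.mulVecLin
  let e := (Module.finBasisOfFinrankEq F R (rfl : _ = M.rank)).equivFun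
  let P : (Fin k → F) →ₗ[F] m → F :=
    R.subtype ∘ₗ e.symm.toLinearMap ∘ₗ LinearMap.funLeft F F (Fin.castLE h)
  have hP : ∀ y ∈ R, ∃ u, P u = y := by
    intro y hy
    obtain ⟨u, hu⟩ :=
      LinearMap.funLeft_surjective_of_injective F F _ (Fin.castLE_injective h) (e ⟨y, hy⟩)
    exact ⟨u, by simp [P, hu]⟩
  choose V hV using fun j => hP (M *ᵥ Pi.single j 1) (LinearMap.mem_range_self M.mulVecLin _)
  refine ⟨LinearMap.toMatrix' P, of fun t j => V j t, ?_⟩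
  ext i j
  have := congrFun (hV j) i
  rwa [← LinearMap.toMatrix'_mulVec, mulVec_single_one] at this

variable {k : ℕ}

lemma exists_hom_digraphCompl_hAdj_of_rank_le {ι : Type*} [Fintype ι] {G : ι → ι → Prop}
    {M : Matrix ι ι F} (hdiag : ∀ i, M i i ≠ 0) (hzero : ∀ i j, i ≠ j → ¬ G i j → M i j = 0)
    (hrank : M.rank ≤ k) :
    ∃ φ : ι → HVtx k F, ∀ i j, digraphCompl G i j → digraphCompl HAdj (φ i) (φ j) := by
  obtain ⟨U, V, rfl⟩ := M.exists_mul_eq_of_rank_le hrank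
  have hUV : ∀ i j, (U * V) i j = bil (U i) (Vᵀ j) := fun i j => mul_apply'
  let φ i := HVtx.ofPair (U i) (Vᵀ i) (hUV i i ▸ hdiag i)
  refine ⟨φ, fun i j ⟨hij, hG⟩ => ?_⟩
  have h0 : bil (φ i).val.1 (φ j).val.2 = 0 :=
    (HVtx.bil_ofPair_eq_zero_iff _ _).mpr (hUV i j ▸ hzero i j hij hG)
  refine ⟨fun he => ?_, fun hadj => hadj.2 h0⟩
  rw [he] at h0
  exact (φ j).2.2.2 h0

lemma le_minrank {n : ℕ} {G : Fin n → Fin n → Prop} {r : ℕ}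
    (h : ∀ M : Matrix (Fin n) (Fin n) F, (∀ i, M i i ≠ 0) →
      (∀ i j, i ≠ j → ¬ G i j → M i j = 0) → r ≤ M.rank) :
    r ≤ minrank F G :=
  le_csInf ⟨_, 1, fun i => by simp, fun i j hij _ => one_apply_ne hij, rfl⟩
    (by rintro _ ⟨M, hdiag, hzero, rfl⟩; exact h M hdiag hzero)

end Minrank

theorem minrank_ge_of_Nhom_ratio_general (k n : ℕ)
    (F : Type) [Field F] [Fintype F]
    (G : Fin n → Fin n → Prop)
    (VK : Type) (K : VK → VK → Prop)
    (hineq : Nat.card (HVtx k F) * Nhom (digraphCompl G) K <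
      n * Nhom (digraphCompl (HAdj (k := k) (F := F))) K) :
    k + 1 ≤ minrank F G := by
  refine le_minrank fun M hdiag hzero => ?_
  by_contra! hrank
  obtain ⟨φ, hφ⟩ :=
    exists_hom_digraphCompl_hAdj_of_rank_le (k := k) hdiag hzero (Nat.lt_succ_iff.mp hrank)
  have := card_mul_Nhom_le_of_isPretransitive _ (digraphCompl_hAdj_smul (F := F)) _ K φ hφ
  rw [Nat.card_fin] at this
  omega

/-- Let `q` be a prime power, `k` a positive integer, `G` a finite loopless digraph on
`n` vertices and `K` a finite digraph.  If `|G| / N(Ḡ,K) > |H_k^q| / N(H̄_k^q,K)`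
(stated cross-multiplied), then `minrank_q(G) ≥ k + 1`. -/
theorem minrank_ge_of_Nhom_ratio (q k n : ℕ) (hq : IsPrimePow q) (hk : 0 < k)
    (F : Type) [Field F] [Fintype F] (hF : Fintype.card F = q)
    (G : Fin n → Fin n → Prop) (hloopless : ∀ i, ¬ G i i)
    (VK : Type) [Fintype VK] (K : VK → VK → Prop)
    (hineq : Nat.card (HVtx k F) * Nhom (digraphCompl G) K <
      n * Nhom (digraphCompl (HAdj (k := k) (F := F))) K) :
    k + 1 ≤ minrank F G :=
  minrank_ge_of_Nhom_ratio_general k n F G VK K hineq
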